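/- arXiv:quant-ph/0206053 — 2 statements merged into one kernel-verified Lean document; each statement's English description precedes it below -/
import Mathlib

section
/- For every even positive integer m, every n ≥ 1, and any two unit vectors φ, φ' ∈ ℂ², the mth moments agree: E((X_n^φ)^m) = E((X_n^{φ'})^m); i.e., the even moments of the quantum random walk are independent of the initial qubit state. -/
/-!
The map `X ↦ adjugate Xᴴ` is a ring endomorphism of `2 × 2` matrices (conjugation by the
antiunitary `v ↦ !![0, 1; -1, 0] * conj v`). For a unitary coin `U` with `δ = det U` it sends
`P` to `star δ • Q` and `Q` to `star δ • P`, hence `Ξ(l, m)` to `star δ ^ (l + m) • Ξ(m, l)`.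
Since `X + adjugate X = trace X • 1` for every `2 × 2` matrix, the Hermitian matrix
`Ξ(l, m)ᴴ Ξ(l, m) + Ξ(m, l)ᴴ Ξ(m, l)` is a scalar, so `P(X_n^φ = k) + P(X_n^φ = -k)` does not
depend on the unit vector `φ`. An even moment only sees these symmetrized probabilities.
-/

open Matrix Finset Filter
open scoped Classical Topology

noncomputable section

/-- `Xi P Q l m` is the sum, over all words of length `l + m` in the letters `P`, `Q`
with exactly `l` occurrences of `P` and `m` occurrences of `Q`, of the ordered product. -/
def Xi (P Q : Matrix (Fin 2) (Fin 2) ℂ) (l m : ℕ) : Matrix (Fin 2) (Fin 2) ℂ :=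
  ∑ w ∈ Finset.univ.filter
      (fun w : Fin (l + m) → Bool => (Finset.univ.filter fun i => w i = true).card = m),
    (List.ofFn fun i => if w i then Q else P).prod

/-- `prob P Q φ n k = P(X_n^φ = k) = ‖Ξ((n-k)/2, (n+k)/2) φ‖²` when `|k| ≤ n` and
`n + k` is even, and `0` otherwise. -/
def prob (P Q : Matrix (Fin 2) (Fin 2) ℂ) (φ : Fin 2 → ℂ) (n : ℕ) (k : ℤ) : ℝ :=
  if Even ((n : ℤ) + k) ∧ k.natAbs ≤ n then
    ∑ i, ‖(Xi P Q (((n : ℤ) - k).toNat / 2) (((n : ℤ) + k).toNat / 2)).mulVec φ i‖ ^ 2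
  else 0

/-- `moment P Q φ n m = E((X_n^φ)^m) = ∑_{k=-n}^{n} k^m P(X_n^φ = k)`. -/
def moment (P Q : Matrix (Fin 2) (Fin 2) ℂ) (φ : Fin 2 → ℂ) (n : ℕ) (m : ℕ) : ℝ :=
  ∑ k ∈ Finset.Icc (-(n : ℤ)) (n : ℤ), (k : ℝ) ^ m * prob P Q φ n k

section WordSum

variable {R : Type*} [Semiring R]

def wordSum (P Q : R) (n k : ℕ) : R :=
  ∑ w ∈ Finset.univ.filter
      (fun w : Fin n → Bool => (Finset.univ.filter fun i => w i = true).card = k),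
    (List.ofFn fun i => if w i then Q else P).prod

theorem Xi_eq_wordSum (P Q : Matrix (Fin 2) (Fin 2) ℂ) (l m : ℕ) :
    Xi P Q l m = wordSum P Q (l + m) m := rfl

theorem map_wordSum {S : Type*} [Semiring S] (f : R →+* S) (P Q : R) (n k : ℕ) :
    f (wordSum P Q n k) = wordSum (f P) (f Q) n k := by
  simp only [wordSum, map_sum, map_list_prod, List.map_ofFn, Function.comp_def, apply_ite]

theorem list_prod_ofFn_smul {A : Type*} [CommSemiring A] [Algebra A R] (δ : A) :
    ∀ {n : ℕ} (x : Fin n → R), (List.ofFn fun i => δ • x i).prod = δ ^ n • (List.ofFn x).prod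
  | 0, _ => by simp
  | n + 1, x => by
    rw [List.ofFn_succ, List.prod_cons, list_prod_ofFn_smul δ (fun i => x i.succ),
      smul_mul_smul_comm, ← pow_succ', List.ofFn_succ, List.prod_cons]

theorem wordSum_smul {A : Type*} [CommSemiring A] [Algebra A R] (δ : A) (P Q : R) (n k : ℕ) :
    wordSum (δ • P) (δ • Q) n k = δ ^ n • wordSum P Q n k := by
  simp only [wordSum, Finset.smul_sum, ← list_prod_ofFn_smul, smul_ite]

theorem card_filter_eq_false {n : ℕ} (w : Fin n → Bool) :
    (Finset.univ.filter fun i => w i = false).card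
      = n - (Finset.univ.filter fun i => w i = true).card := by
  have h := Finset.card_filter_add_card_filter_not (s := Finset.univ) (fun i : Fin n => w i = true)
  simp only [Finset.card_univ, Fintype.card_fin, Bool.not_eq_true] at h
  omega

theorem wordSum_swap (P Q : R) {n k : ℕ} (hk : k ≤ n) :
    wordSum Q P n k = wordSum P Q n (n - k) := by
  refine Finset.sum_nbij' (fun w i => !w i) (fun w i => !w i) ?_ ?_ ?_ ?_ ?_
  · intro w hw
    simp_all [card_filter_eq_false]
  · intro w hw
    have := Finset.card_filter_le Finset.univ (fun i => w i = true)
    simp_all [card_filter_eq_false]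
    omega
  · intro w _; simp
  · intro w _; simp
  · intro w _
    congr 2; funext i; cases h : w i <;> simp [h]

end WordSum

section Adjugate

variable {R : Type*} [CommRing R]

theorem add_adjugate_fin_two (X : Matrix (Fin 2) (Fin 2) R) : X + adjugate X = trace X • 1 := by
  ext i j; fin_cases i <;> fin_cases j <;> simp [adjugate_fin_two, trace_fin_two]; ring

theorem adjugate_add_fin_two (X Y : Matrix (Fin 2) (Fin 2) R) :
    adjugate (X + Y) = adjugate X + adjugate Y := by
  ext i j; fin_cases i <;> fin_cases j <;> simp [adjugate_fin_two] <;> ring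

variable [StarRing R]

def adjConjTranspose : Matrix (Fin 2) (Fin 2) R →+* Matrix (Fin 2) (Fin 2) R where
  toFun X := adjugate Xᴴ
  map_one' := by simp
  map_mul' X Y := by simp [conjTranspose_mul, adjugate_mul_distrib]
  map_zero' := by simp
  map_add' X Y := by simp [conjTranspose_add, adjugate_add_fin_two]

theorem adjConjTranspose_apply (X : Matrix (Fin 2) (Fin 2) R) :
    adjConjTranspose X = adjugate Xᴴ := rfl

theorem adjConjTranspose_conjTranspose (X : Matrix (Fin 2) (Fin 2) R) :
    adjConjTranspose Xᴴ = (adjConjTranspose X)ᴴ := by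
  simp [adjConjTranspose_apply, adjugate_conjTranspose]

theorem conjTranspose_mul_self_add_adjConjTranspose (G : Matrix (Fin 2) (Fin 2) R) :
    Gᴴ * G + (adjConjTranspose G)ᴴ * adjConjTranspose G = trace (Gᴴ * G) • 1 := by
  rw [← adjConjTranspose_conjTranspose, ← map_mul, adjConjTranspose_apply,
    conjTranspose_mul, conjTranspose_conjTranspose, add_adjugate_fin_two]

end Adjugate

theorem adjugate_conjTranspose_of_mem_unitaryGroup {n R : Type*} [Fintype n] [DecidableEq n]
    [CommRing R] [StarRing R] {U : Matrix n n R} (hU : U ∈ unitaryGroup n R) :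
    adjugate Uᴴ = star U.det • U := by
  have hUUH : U * Uᴴ = 1 := mem_unitaryGroup_iff.mp hU
  calc adjugate Uᴴ = U * (Uᴴ * adjugate Uᴴ) := by rw [← Matrix.mul_assoc, hUUH, Matrix.one_mul]
    _ = star U.det • U := by rw [mul_adjugate, det_conjTranspose, Matrix.mul_smul, Matrix.mul_one]

theorem adjConjTranspose_diagonal_mul {R : Type*} [CommRing R] [StarRing R]
    {U : Matrix (Fin 2) (Fin 2) R} (hU : U ∈ unitaryGroup (Fin 2) R) (p q : R) :
    adjConjTranspose (!![p, 0; 0, q] * U) = star U.det • (!![star q, 0; 0, star p] * U) := by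
  rw [map_mul, adjConjTranspose_apply, adjConjTranspose_apply,
    adjugate_conjTranspose_of_mem_unitaryGroup hU, Matrix.mul_smul]
  congr 2
  ext i j; fin_cases i <;> fin_cases j <;> simp [adjugate_fin_two]

section QuantumWalk

variable {a b c d : ℂ}

theorem adjConjTranspose_Xi (hU : !![a, b; c, d] ∈ unitaryGroup (Fin 2) ℂ) (l m : ℕ) :
    adjConjTranspose (Xi !![a, b; 0, 0] !![0, 0; c, d] l m)
      = star (!![a, b; c, d]).det ^ (l + m) • Xi !![a, b; 0, 0] !![0, 0; c, d] m l := by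
  have hP := adjConjTranspose_diagonal_mul hU 1 0
  have hQ := adjConjTranspose_diagonal_mul hU 0 1
  simp only [star_one, star_zero, mul_fin_two, one_mul, zero_mul, add_zero, zero_add] at hP hQ
  rw [Xi_eq_wordSum, map_wordSum, hP, hQ, wordSum_smul, wordSum_swap _ _ le_add_self,
    Nat.add_sub_cancel, Xi_eq_wordSum, add_comm m l]

theorem Xi_gram_add_gram_swap (hU : !![a, b; c, d] ∈ unitaryGroup (Fin 2) ℂ) (l m : ℕ) :
    (Xi !![a, b; 0, 0] !![0, 0; c, d] l m)ᴴ * Xi !![a, b; 0, 0] !![0, 0; c, d] l m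
        + (Xi !![a, b; 0, 0] !![0, 0; c, d] m l)ᴴ * Xi !![a, b; 0, 0] !![0, 0; c, d] m l
      = trace ((Xi !![a, b; 0, 0] !![0, 0; c, d] l m)ᴴ * Xi !![a, b; 0, 0] !![0, 0; c, d] l m)
          • 1 := by
  have hdet : star (star (!![a, b; c, d]).det ^ (l + m)) * star (!![a, b; c, d]).det ^ (l + m)
      = 1 := by
    rw [star_pow, star_star, ← mul_pow, Unitary.mul_star_self_of_mem (det_of_mem_unitary hU),
      one_pow]
  rw [← conjTranspose_mul_self_add_adjConjTranspose, adjConjTranspose_Xi hU, conjTranspose_smul,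
    smul_mul_smul_comm, hdet, one_smul]

end QuantumWalk

theorem sum_norm_sq_eq_re_star_dotProduct {n : Type*} [Fintype n] (v : n → ℂ) :
    ∑ i, ‖v i‖ ^ 2 = (star v ⬝ᵥ v).re := by
  simp [dotProduct, Complex.conj_mul', ← Complex.ofReal_pow]

theorem sum_norm_sq_mulVec {m n : Type*} [Fintype m] [Fintype n] (G : Matrix m n ℂ)
    (ψ : n → ℂ) : ∑ i, ‖(G *ᵥ ψ) i‖ ^ 2 = (star ψ ⬝ᵥ (Gᴴ * G) *ᵥ ψ).re := by
  rw [sum_norm_sq_eq_re_star_dotProduct, star_mulVec, ← dotProduct_mulVec, mulVec_mulVec]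

theorem sum_norm_sq_mulVec_add_of_gram {m n : Type*} [Fintype m] [Fintype n] [DecidableEq n]
    {G H : Matrix m n ℂ} {t : ℂ} (h : Gᴴ * G + Hᴴ * H = t • 1) (ψ : n → ℂ) :
    ∑ i, ‖(G *ᵥ ψ) i‖ ^ 2 + ∑ i, ‖(H *ᵥ ψ) i‖ ^ 2 = t.re * ∑ i, ‖ψ i‖ ^ 2 := by
  have hreal : (star ψ ⬝ᵥ ψ).im = 0 := by simp [dotProduct, Complex.conj_mul', ← Complex.ofReal_pow]
  rw [sum_norm_sq_mulVec, sum_norm_sq_mulVec, ← Complex.add_re, ← dotProduct_add, ← add_mulVec, h,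
    smul_mulVec, one_mulVec, dotProduct_smul, smul_eq_mul, Complex.mul_re, hreal, mul_zero,
    sub_zero, sum_norm_sq_eq_re_star_dotProduct]

section Moments

variable (P Q : Matrix (Fin 2) (Fin 2) ℂ) (ψ : Fin 2 → ℂ) (n : ℕ)

theorem prob_neg (k : ℤ) :
    prob P Q ψ n (-k) = if Even ((n : ℤ) + k) ∧ k.natAbs ≤ n then
      ∑ i, ‖(Xi P Q (((n : ℤ) + k).toNat / 2) (((n : ℤ) - k).toNat / 2)).mulVec ψ i‖ ^ 2
    else 0 := by
  simp only [prob, Int.natAbs_neg, sub_neg_eq_add, ← sub_eq_add_neg, Int.even_sub, Int.even_add]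

theorem moment_eq_of_prob_add_prob_neg_eq {m : ℕ} (hm : Even m) (φ φ' : Fin 2 → ℂ)
    (h : ∀ k, prob P Q φ n k + prob P Q φ n (-k) = prob P Q φ' n k + prob P Q φ' n (-k)) :
    moment P Q φ n m = moment P Q φ' n m := by
  have hsymm : ∀ ψ, 2 * moment P Q ψ n m
      = ∑ k ∈ Finset.Icc (-(n : ℤ)) n, (k : ℝ) ^ m * (prob P Q ψ n k + prob P Q ψ n (-k)) := by
    intro ψ
    have hreflect : moment P Q ψ n m
        = ∑ k ∈ Finset.Icc (-(n : ℤ)) n, (k : ℝ) ^ m * prob P Q ψ n (-k) :=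
      Finset.sum_equiv (Equiv.neg ℤ)
        (fun k => by simp only [mem_Icc, Equiv.neg_apply, neg_le_neg_iff]; omega)
        (fun k _ => by simp [hm.neg_pow])
    rw [two_mul]
    nth_rewrite 2 [hreflect]
    simp only [moment, ← Finset.sum_add_distrib, mul_add]
  rw [← mul_right_inj' (two_ne_zero' ℝ), hsymm φ, hsymm φ']
  exact Finset.sum_congr rfl fun k _ => by rw [h k]

end Moments

theorem prob_add_prob_neg {a b c d : ℂ} (hU : !![a, b; c, d] ∈ unitaryGroup (Fin 2) ℂ)
    (ψ : Fin 2 → ℂ) (n : ℕ) (k : ℤ) :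
    prob !![a, b; 0, 0] !![0, 0; c, d] ψ n k + prob !![a, b; 0, 0] !![0, 0; c, d] ψ n (-k)
      = if Even ((n : ℤ) + k) ∧ k.natAbs ≤ n then
          (trace ((Xi !![a, b; 0, 0] !![0, 0; c, d] (((n : ℤ) - k).toNat / 2)
            (((n : ℤ) + k).toNat / 2))ᴴ * Xi !![a, b; 0, 0] !![0, 0; c, d]
            (((n : ℤ) - k).toNat / 2) (((n : ℤ) + k).toNat / 2))).re * ∑ i, ‖ψ i‖ ^ 2
        else 0 := by
  rw [prob, prob_neg]
  split_ifs
  · exact sum_norm_sq_mulVec_add_of_gram (Xi_gram_add_gram_swap hU _ _) ψ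
  · simp

theorem even_moment_independent_general (a b c d : ℂ)
    (hU : !![a, b; c, d] ∈ Matrix.unitaryGroup (Fin 2) ℂ)
    (n : ℕ) (m : ℕ) (hm : Even m)
    (φ φ' : Fin 2 → ℂ)
    (hφ : ∑ i, ‖φ i‖ ^ 2 = 1) (hφ' : ∑ i, ‖φ' i‖ ^ 2 = 1) :
    moment !![a, b; 0, 0] !![0, 0; c, d] φ n m =
      moment !![a, b; 0, 0] !![0, 0; c, d] φ' n m :=
  moment_eq_of_prob_add_prob_neg_eq _ _ n hm φ φ' fun k => by
    rw [prob_add_prob_neg hU, prob_add_prob_neg hU, hφ, hφ']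

/-- The even moments of the quantum random walk are independent of the initial qubit
state: for even `m > 0` and any two unit vectors `φ, φ'`,
`E((X_n^φ)^m) = E((X_n^{φ'})^m)`. -/
theorem even_moment_independent (a b c d : ℂ)
    (hU : !![a, b; c, d] ∈ Matrix.unitaryGroup (Fin 2) ℂ)
    (habcd : a * b * c * d ≠ 0)
    (n : ℕ) (hn : 1 ≤ n) (m : ℕ) (hm : Even m) (hm0 : 0 < m)
    (φ φ' : Fin 2 → ℂ)
    (hφ : ∑ i, ‖φ i‖ ^ 2 = 1) (hφ' : ∑ i, ‖φ' i‖ ^ 2 = 1) :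
    moment !![a, b; 0, 0] !![0, 0; c, d] φ n m =
      moment !![a, b; 0, 0] !![0, 0; c, d] φ' n m :=
  even_moment_independent_general a b c d hU n m hm φ φ' hφ hφ'

end
end

section
/- For any unit vector φ = (α,β) ∈ ℂ², the mean of the limit density is ∫_{−|a|}^{|a|} x · f(x; φ) dx = − ( |α|² − |β|² + (aα·conj(bβ) + conj(aα)·bβ)/|a|² ) · (1 − √(1−|a|²)). -/
/-!
Write `r = |a|`, `s = √(1 - r²)` and `m` for the coefficient of `x` in the density. The function
`momentPrimitive r m` is a primitive of `x (1 - m x) / ((1 - x²) √(r² - x²))` on `(-r, r)`; its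
last term is `arctan (x s / √(r² - x²))` rewritten as an `arcsin`, which makes it continuous on
`[-r, r]`. The integrand is a continuous function times `(r² - x²)^(-1/2)`, the derivative of the
monotone `arcsin (x / r)`, hence integrable, and the fundamental theorem of calculus gives
`m π (1 - 1 / s)`. The factor `s / π` of the density turns this into `-m (1 - s)`. Unitarity gives `|a|² + |b|² = 1`, so `0 < |a| < 1`.
-/

open Real Set MeasureTheory intervalIntegral

theorem HasDerivAt.arcsin {f : ℝ → ℝ} {f' x : ℝ} (hf : HasDerivAt f f' x) (h : f x ^ 2 < 1) :
    HasDerivAt (fun y => arcsin (f y)) (f' / √(1 - f x ^ 2)) x := by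
  obtain ⟨h₁, h₂⟩ := abs_lt_of_sq_lt_sq' (h.trans_eq (one_pow 2).symm) zero_le_one
  simpa [div_eq_inv_mul, Function.comp_def] using (hasDerivAt_arcsin h₁.ne' h₂.ne).comp x hf

lemma hasDerivAt_sqrt_sub_sq {c x : ℝ} (hx : x ^ 2 < c) :
    HasDerivAt (fun y => √(c - y ^ 2)) (-x / √(c - x ^ 2)) x := by
  have hq : 0 < √(c - x ^ 2) := sqrt_pos.2 (sub_pos.2 hx)
  convert ((hasDerivAt_pow 2 x).const_sub c).sqrt (sub_pos.2 hx).ne' using 1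
  field_simp
  ring

lemma hasDerivAt_arcsin_div {r x : ℝ} (hr : 0 < r) (hx : x ^ 2 < r ^ 2) :
    HasDerivAt (fun y => arcsin (y / r)) (√(r ^ 2 - x ^ 2))⁻¹ x := by
  have h : (x / r) ^ 2 < 1 := by rwa [div_pow, div_lt_one (by positivity)]
  convert ((hasDerivAt_id' x).div_const r).arcsin h using 1
  rw [show 1 - (x / r) ^ 2 = (r ^ 2 - x ^ 2) / r ^ 2 by field_simp,
    sqrt_div' _ (sq_nonneg r), sqrt_sq hr.le]
  have hq : 0 < √(r ^ 2 - x ^ 2) := sqrt_pos.2 (sub_pos.2 hx)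
  field_simp

lemma hasDerivAt_arctan_sqrt_sub_sq_div {c s x : ℝ} (hs : s ≠ 0) (hx : x ^ 2 < c) :
    HasDerivAt (fun y => arctan (√(c - y ^ 2) / s))
      (-(x * s) / ((s ^ 2 + c - x ^ 2) * √(c - x ^ 2))) x := by
  have hq : 0 < √(c - x ^ 2) := sqrt_pos.2 (sub_pos.2 hx)
  have hsc : s ^ 2 + (c - x ^ 2) ≠ 0 := by nlinarith [sq_pos_of_ne_zero hs]
  convert ((hasDerivAt_sqrt_sub_sq hx).div_const s).arctan using 1
  rw [div_pow, sq_sqrt (sub_pos.2 hx).le, one_add_div (pow_ne_zero 2 hs), ← add_sub_assoc]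
  field_simp

lemma hasDerivAt_arcsin_mul_sqrt_div {r x : ℝ} (hr : 0 < r) (hr1 : r < 1)
    (hx : x ^ 2 < r ^ 2) :
    HasDerivAt (fun y => arcsin (y * √(1 - r ^ 2) / (r * √(1 - y ^ 2))))
      (√(1 - r ^ 2) / ((1 - x ^ 2) * √(r ^ 2 - x ^ 2))) x := by
  set s := √(1 - r ^ 2)
  have hs2 : s ^ 2 = 1 - r ^ 2 := sq_sqrt (by nlinarith)
  have hx1 : x ^ 2 < 1 := by nlinarith
  have h1x : 0 < 1 - x ^ 2 := sub_pos.2 hx1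
  have hp : 0 < √(1 - x ^ 2) := sqrt_pos.2 h1x
  have hp2 : √(1 - x ^ 2) ^ 2 = 1 - x ^ 2 := sq_sqrt (by linarith)
  have hq : 0 < √(r ^ 2 - x ^ 2) := sqrt_pos.2 (sub_pos.2 hx)
  have hq2 : √(r ^ 2 - x ^ 2) ^ 2 = r ^ 2 - x ^ 2 := sq_sqrt (by linarith)
  have hu : 1 - (x * s / (r * √(1 - x ^ 2))) ^ 2 =
      (√(r ^ 2 - x ^ 2) / (r * √(1 - x ^ 2))) ^ 2 := by
    field_simp
    rw [hs2, hp2, hq2]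
    ring
  have hu1 : (x * s / (r * √(1 - x ^ 2))) ^ 2 < 1 := by
    rw [← sub_pos, hu]; positivity
  refine ((((hasDerivAt_id' x).mul_const s).div ((hasDerivAt_sqrt_sub_sq hx1).const_mul r)
    (by positivity)).arcsin hu1).congr_deriv ?_
  rw [Pi.div_apply, hu, sqrt_sq (by positivity)]
  field_simp
  rw [hp2]
  ring

lemma intervalIntegrable_div_sqrt_sq_sub_sq {r : ℝ} (hr : 0 < r) {h : ℝ → ℝ}
    (hh : ContinuousOn h (Icc (-r) r)) :
    IntervalIntegrable (fun x => h x / √(r ^ 2 - x ^ 2)) volume (-r) r := by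
  have hr' : -r ≤ r := by linarith
  simp only [div_eq_mul_inv]
  refine IntervalIntegrable.continuousOn_mul ?_ (by rwa [uIcc_of_le hr'])
  refine intervalIntegrable_deriv_of_nonneg (g := fun y => arcsin (y / r)) (by fun_prop)
    (fun x hx => ?_) (fun _ _ => by positivity)
  rw [min_eq_left hr', max_eq_right hr'] at hx
  exact hasDerivAt_arcsin_div hr (sq_lt_sq' hx.1 hx.2)

noncomputable def momentPrimitive (r m x : ℝ) : ℝ :=
  -(1 / √(1 - r ^ 2)) * arctan (√(r ^ 2 - x ^ 2) / √(1 - r ^ 2)) + m * arcsin (x / r) -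
    m / √(1 - r ^ 2) * arcsin (x * √(1 - r ^ 2) / (r * √(1 - x ^ 2)))

section momentPrimitive

variable {r : ℝ} (m : ℝ)

lemma one_sub_sq_pos_of_mem_Icc (hr1 : r < 1) {x : ℝ} (hx : x ∈ Icc (-r) r) : 0 < 1 - x ^ 2 := by
  have : 0 ≤ r := by linarith [hx.1.trans hx.2]
  nlinarith [sq_le_sq' hx.1 hx.2]

lemma hasDerivAt_momentPrimitive (hr : 0 < r) (hr1 : r < 1) {x : ℝ} (hx : x ∈ Ioo (-r) r) :
    HasDerivAt (momentPrimitive r m)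
      (x * (1 - m * x) / ((1 - x ^ 2) * √(r ^ 2 - x ^ 2))) x := by
  have hs : 0 < √(1 - r ^ 2) := sqrt_pos.2 (by nlinarith)
  have hx2 := sq_lt_sq' hx.1 hx.2
  have h1x := one_sub_sq_pos_of_mem_Icc hr1 (Ioo_subset_Icc_self hx)
  have hq : 0 < √(r ^ 2 - x ^ 2) := sqrt_pos.2 (sub_pos.2 hx2)
  have hs2 : √(1 - r ^ 2) ^ 2 + r ^ 2 - x ^ 2 = 1 - x ^ 2 := by
    rw [sq_sqrt (by nlinarith)]; ring
  refine ((((hasDerivAt_arctan_sqrt_sub_sq_div hs.ne' hx2).const_mul _).add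
    ((hasDerivAt_arcsin_div hr hx2).const_mul m)).sub
    ((hasDerivAt_arcsin_mul_sqrt_div hr hr1 hx2).const_mul _)).congr_deriv ?_
  rw [hs2]
  field_simp
  ring

lemma continuousOn_momentPrimitive (hr : 0 < r) (hr1 : r < 1) :
    ContinuousOn (momentPrimitive r m) (Icc (-r) r) := by
  have : ContinuousOn (fun x => x * √(1 - r ^ 2) / (r * √(1 - x ^ 2))) (Icc (-r) r) :=
    ContinuousOn.div (by fun_prop) (by fun_prop) fun x hx => by
      have := sqrt_pos.2 (one_sub_sq_pos_of_mem_Icc hr1 hx); positivity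
  exact (by fun_prop : Continuous fun x => -(1 / √(1 - r ^ 2)) *
    arctan (√(r ^ 2 - x ^ 2) / √(1 - r ^ 2)) + m * arcsin (x / r)).continuousOn.sub
    ((continuous_arcsin.comp_continuousOn this).const_smul (m / √(1 - r ^ 2)))

lemma momentPrimitive_sub (hr : 0 < r) (hr1 : r < 1) :
    momentPrimitive r m r - momentPrimitive r m (-r) = m * π * (1 - (√(1 - r ^ 2))⁻¹) := by
  have hs : 0 < √(1 - r ^ 2) := sqrt_pos.2 (by nlinarith)
  have hss : r * √(1 - r ^ 2) / (r * √(1 - r ^ 2)) = 1 := div_self (mul_pos hr hs).ne'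
  simp only [momentPrimitive, neg_sq, sub_self, sqrt_zero, zero_div, arctan_zero,
    div_self hr.ne', neg_div, neg_mul, hss, arcsin_one, arcsin_neg]
  field_simp
  ring

theorem integral_mul_one_sub_mul_div_one_sub_sq_mul_sqrt (hr : 0 < r) (hr1 : r < 1) :
    ∫ x in (-r)..r, x * (1 - m * x) / ((1 - x ^ 2) * √(r ^ 2 - x ^ 2)) =
      m * π * (1 - (√(1 - r ^ 2))⁻¹) := by
  have hint : IntervalIntegrable (fun x => x * (1 - m * x) / ((1 - x ^ 2) * √(r ^ 2 - x ^ 2)))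
      volume (-r) r := by
    simpa only [div_div] using intervalIntegrable_div_sqrt_sq_sub_sq hr
      (h := fun x => x * (1 - m * x) / (1 - x ^ 2))
      (ContinuousOn.div (by fun_prop) (by fun_prop) fun x hx =>
        (one_sub_sq_pos_of_mem_Icc hr1 hx).ne')
  rw [integral_eq_sub_of_hasDerivAt_of_le (by linarith) (continuousOn_momentPrimitive m hr hr1)
    (fun x hx => hasDerivAt_momentPrimitive m hr hr1 hx) hint, momentPrimitive_sub m hr hr1]

end momentPrimitive

theorem integral_mul_density {r : ℝ} (hr : 0 < r) (hr1 : r < 1) (m : ℝ) :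
    ∫ x in (-r)..r, x * (√(1 - r ^ 2) / (π * (1 - x ^ 2) * √(r ^ 2 - x ^ 2)) * (1 - m * x)) =
      -m * (1 - √(1 - r ^ 2)) := by
  have hs : 0 < √(1 - r ^ 2) := sqrt_pos.2 (by nlinarith)
  have hintegrand : ∀ x, x * (√(1 - r ^ 2) / (π * (1 - x ^ 2) * √(r ^ 2 - x ^ 2)) * (1 - m * x)) =
      √(1 - r ^ 2) / π * (x * (1 - m * x) / ((1 - x ^ 2) * √(r ^ 2 - x ^ 2))) := fun x => by
    simp only [div_eq_mul_inv, mul_inv]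
    ring
  simp only [hintegrand, intervalIntegral.integral_const_mul,
    integral_mul_one_sub_mul_div_one_sub_sq_mul_sqrt m hr hr1]
  field_simp
  ring

lemma norm_sq_add_norm_sq_eq_one_of_mem_unitaryGroup {a b c d : ℂ}
    (hU : !![a, b; c, d] ∈ Matrix.unitaryGroup (Fin 2) ℂ) : ‖a‖ ^ 2 + ‖b‖ ^ 2 = 1 := by
  have h := congrFun (congrFun (Matrix.mem_unitaryGroup_iff.1 hU) 0) 0
  simp only [Matrix.mul_apply, Matrix.of_apply, Matrix.cons_val', Matrix.cons_val_fin_one,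
    Matrix.cons_val_zero, Matrix.cons_val_one, Matrix.star_apply, RCLike.star_def,
    Complex.mul_conj, Complex.normSq_eq_norm_sq, Fin.sum_univ_two, Matrix.one_apply_eq] at h
  exact_mod_cast h

theorem density_mean_general (a b c d : ℂ)
    (hU : !![a, b; c, d] ∈ Matrix.unitaryGroup (Fin 2) ℂ)
    (habcd : a * b * c * d ≠ 0)
    (α β : ℂ) :
    ∫ x in (-(‖a‖))..(‖a‖),
        x * (Real.sqrt (1 - ‖a‖ ^ 2) /
            (Real.pi * (1 - x ^ 2) * Real.sqrt (‖a‖ ^ 2 - x ^ 2)) *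
          (1 - (‖α‖ ^ 2 - ‖β‖ ^ 2 +
            (a * α * (starRingEnd ℂ) (b * β) +
              (starRingEnd ℂ) (a * α) * (b * β)).re / ‖a‖ ^ 2) * x)) =
      -(‖α‖ ^ 2 - ‖β‖ ^ 2 +
          (a * α * (starRingEnd ℂ) (b * β) +
            (starRingEnd ℂ) (a * α) * (b * β)).re / ‖a‖ ^ 2) *
        (1 - Real.sqrt (1 - ‖a‖ ^ 2)) := by
  have ha : a ≠ 0 := by rintro rfl; simp at habcd
  have hb : b ≠ 0 := by rintro rfl; simp at habcd
  have hab := norm_sq_add_norm_sq_eq_one_of_mem_unitaryGroup hU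
  exact integral_mul_density (norm_pos_iff.2 ha) (by nlinarith [norm_pos_iff.2 hb]) _

/-- The mean of the limit density:
`∫ x f(x;φ) dx = -(|α|²-|β|² + (aα conj(bβ) + conj(aα) bβ)/|a|²)(1 - √(1-|a|²))`. -/
theorem density_mean (a b c d : ℂ)
    (hU : !![a, b; c, d] ∈ Matrix.unitaryGroup (Fin 2) ℂ)
    (habcd : a * b * c * d ≠ 0)
    (α β : ℂ) (hφ : ‖α‖ ^ 2 + ‖β‖ ^ 2 = 1) :
    ∫ x in (-(‖a‖))..(‖a‖),
        x * (Real.sqrt (1 - ‖a‖ ^ 2) /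
            (Real.pi * (1 - x ^ 2) * Real.sqrt (‖a‖ ^ 2 - x ^ 2)) *
          (1 - (‖α‖ ^ 2 - ‖β‖ ^ 2 +
            (a * α * (starRingEnd ℂ) (b * β) +
              (starRingEnd ℂ) (a * α) * (b * β)).re / ‖a‖ ^ 2) * x)) =
      -(‖α‖ ^ 2 - ‖β‖ ^ 2 +
          (a * α * (starRingEnd ℂ) (b * β) +
            (starRingEnd ℂ) (a * α) * (b * β)).re / ‖a‖ ^ 2) *
        (1 - Real.sqrt (1 - ‖a‖ ^ 2)) :=
  density_mean_general a b c d hU habcd α β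
end
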